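/- arXiv:2504.16703 — 2 statements merged into one kernel-verified Lean document; each statement's English description precedes it below -/
import Mathlib

section
/- For every μStipula^DI contract C and every state Q of C, Q is reachable in C with respect to the relation → if and only if Q is reachable in C with respect to the relation →_tp. -/
namespace MicroStipula

/-- A pending event (the same shape is used for event declarations occurring in
function bodies): `time ≫_line src ⇒ tgt`.  For a declaration, `time` is the delay `k`
of the time expression `now + k`. -/
structure Ev where
  time : ℕ
  line : ℕ
  src  : ℕ
  tgt  : ℕ
  deriving DecidableEq

/-- A function declaration `@src name { body } ⇒ @tgt`. -/
structure FunDecl where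
  src  : ℕ
  name : ℕ
  body : List Ev
  tgt  : ℕ
  deriving DecidableEq

/-- A μStipula contract: a finite set of states, an initial state and
a finite set of functions. -/
structure Contract where
  states : List ℕ
  init   : ℕ
  funs   : List FunDecl
  deriving DecidableEq

/-- The `Σ` component of a configuration: either `−` or a continuation `Ψ ⇒ Q`. -/
inductive Sig where
  | none : Sig
  | cont : Multiset Ev → ℕ → Sig
  deriving DecidableEq

/-- A configuration `⟨C(Q, Σ, Ψ), t⟩`. -/
structure Config where
  state   : ℕ
  sig     : Sig
  pending : Multiset Ev
  time    : ℕ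
  deriving DecidableEq

/-- `nored(Ψ, Q)`: `Ψ` contains no event of the form `0 ≫_n Q ⇒ Q'`. -/
def nored (Ψ : Multiset Ev) (Q : ℕ) : Prop :=
  ∀ e ∈ Ψ, e.time = 0 → e.src ≠ Q

/-- `Ψ↓`: remove the events with time value `0` and decrease all other time values by one. -/
def tickDown (Ψ : Multiset Ev) : Multiset Ev :=
  (Ψ.filter fun e => e.time ≠ 0).map fun e => ⟨e.time - 1, e.line, e.src, e.tgt⟩

/-- The multiset of pending events generated by a function body
(the place-holder `now` is dropped: `now + k` becomes the value `k`). -/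
def bodyEvents (W : List Ev) : Multiset Ev := (W : Multiset Ev)

/-- `InitEv C`: the set of initial states of the events of `C`. -/
def InitEv (C : Contract) : Set ℕ :=
  {Q | ∃ f ∈ C.funs, ∃ e ∈ f.body, e.src = Q}

/-- The transition relation `→` of μStipula. -/
inductive Step (C : Contract) : Config → Config → Prop
  | func {Ψ : Multiset Ev} {t : ℕ} (f : FunDecl) (hf : f ∈ C.funs)
      (hn : nored Ψ f.src) :
      Step C ⟨f.src, Sig.none, Ψ, t⟩ ⟨f.src, Sig.cont (bodyEvents f.body) f.tgt, Ψ, t⟩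
  | stateChange {Q Q' : ℕ} {Ψ' Ψ : Multiset Ev} {t : ℕ} :
      Step C ⟨Q, Sig.cont Ψ' Q', Ψ, t⟩ ⟨Q', Sig.none, Ψ' + Ψ, t⟩
  | eventMatch {Q : ℕ} {Ψ : Multiset Ev} {t : ℕ} (e : Ev)
      (he : e ∈ Ψ) (h0 : e.time = 0) (hs : e.src = Q) :
      Step C ⟨Q, Sig.none, Ψ, t⟩ ⟨Q, Sig.cont 0 e.tgt, Ψ.erase e, t⟩
  | tick {Q : ℕ} {Ψ : Multiset Ev} {t : ℕ} (hn : nored Ψ Q) :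
      Step C ⟨Q, Sig.none, Ψ, t⟩ ⟨Q, Sig.none, tickDown Ψ, t + 1⟩

/-- The transition relation `→_tp` of μStipula^DI+ (rule (Tick) replaced by (Tick-Plus)). -/
inductive StepTP (C : Contract) : Config → Config → Prop
  | func {Ψ : Multiset Ev} {t : ℕ} (f : FunDecl) (hf : f ∈ C.funs)
      (hn : nored Ψ f.src) :
      StepTP C ⟨f.src, Sig.none, Ψ, t⟩ ⟨f.src, Sig.cont (bodyEvents f.body) f.tgt, Ψ, t⟩
  | stateChange {Q Q' : ℕ} {Ψ' Ψ : Multiset Ev} {t : ℕ} :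
      StepTP C ⟨Q, Sig.cont Ψ' Q', Ψ, t⟩ ⟨Q', Sig.none, Ψ' + Ψ, t⟩
  | eventMatch {Q : ℕ} {Ψ : Multiset Ev} {t : ℕ} (e : Ev)
      (he : e ∈ Ψ) (h0 : e.time = 0) (hs : e.src = Q) :
      StepTP C ⟨Q, Sig.none, Ψ, t⟩ ⟨Q, Sig.cont 0 e.tgt, Ψ.erase e, t⟩
  | tickPlus {Q : ℕ} {Ψ : Multiset Ev} {t : ℕ} (hn : Q ∉ InitEv C) :
      StepTP C ⟨Q, Sig.none, Ψ, t⟩ ⟨Q, Sig.none, tickDown Ψ, t + 1⟩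

/-- State reachability (w.r.t. `→`): some configuration `⟨C(Q, −, Ψ), t'⟩` is reachable
from the initial configuration `⟨C(Q_init, −, −), t⟩`. -/
def Reachable (C : Contract) (Q : ℕ) : Prop :=
  ∃ t t' Ψ, Relation.ReflTransGen (Step C)
    ⟨C.init, Sig.none, 0, t⟩ ⟨Q, Sig.none, Ψ, t'⟩

/-- State reachability w.r.t. `→_tp`. -/
def ReachableTP (C : Contract) (Q : ℕ) : Prop :=
  ∃ t t' Ψ, Relation.ReflTransGen (StepTP C)
    ⟨C.init, Sig.none, 0, t⟩ ⟨Q, Sig.none, Ψ, t'⟩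

/-- Well-formedness: every state mentioned in the contract belongs to its set of states. -/
def Contract.WF (C : Contract) : Prop :=
  C.init ∈ C.states ∧ ∀ f ∈ C.funs, f.src ∈ C.states ∧ f.tgt ∈ C.states ∧
    ∀ e ∈ f.body, e.src ∈ C.states ∧ e.tgt ∈ C.states

/-- μStipula^I : every time expression is `now + 0`. -/
def Instantaneous (C : Contract) : Prop := ∀ f ∈ C.funs, ∀ e ∈ f.body, e.time = 0

/-- μStipula^TA : every time expression is `now + k` with `k > 0`. -/
def TimeAhead (C : Contract) : Prop := ∀ f ∈ C.funs, ∀ e ∈ f.body, 0 < e.time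

/-- μStipula^D : no state is both the initial state of a function and of an event. -/
def Determinate (C : Contract) : Prop := ∀ f ∈ C.funs, f.src ∉ InitEv C

/-- μStipula^DI. -/
def DetInst (C : Contract) : Prop := Determinate C ∧ Instantaneous C

/-- A pending event of the contract `C`: it stems from an event declaration of `C`,
with a (possibly) decreased time value. -/
def EvOf (C : Contract) (e : Ev) : Prop :=
  ∃ f ∈ C.funs, ∃ d ∈ f.body,
    e.line = d.line ∧ e.src = d.src ∧ e.tgt = d.tgt ∧ e.time ≤ d.time

/-- The possible `Σ` components of configurations of `C`. -/
inductive SigOf (C : Contract) : Sig → Prop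
  | none : SigOf C Sig.none
  | func (f : FunDecl) (hf : f ∈ C.funs) : SigOf C (Sig.cont (bodyEvents f.body) f.tgt)
  | event (Q : ℕ) (hQ : Q ∈ C.states) : SigOf C (Sig.cont 0 Q)

/-- Configurations of a contract `C` (the set `𝒞_C`). -/
def ConfigOf (C : Contract) (c : Config) : Prop :=
  c.state ∈ C.states ∧ SigOf C c.sig ∧ ∀ e ∈ c.pending, EvOf C e

/-- The quasi-ordering `⪯` on configurations: same state, same `Σ`, multiset inclusion
of the pending events; the time component is disregarded. -/
def ConfigLe (c c' : Config) : Prop :=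
  c.state = c'.state ∧ c.sig = c'.sig ∧ c.pending ≤ c'.pending

/-- The (unique) shape of a (Tick) transition out of a configuration. -/
def IsTickStep (c c' : Config) : Prop :=
  c.sig = Sig.none ∧ c' = ⟨c.state, Sig.none, tickDown c.pending, c.time + 1⟩

/-- A configuration is stuck if every computation starting from it consists only of
instances of rule (Tick). -/
def Stuck (C : Contract) (c : Config) : Prop :=
  ∀ c₁ c₂, Relation.ReflTransGen (Step C) c c₁ → Step C c₁ c₂ → IsTickStep c₁ c₂

/-- A well-quasi-ordering: every infinite sequence contains an increasing pair. -/
def IsWQO {α : Type*} (r : α → α → Prop) : Prop :=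
  ∀ f : ℕ → α, ∃ i j, i < j ∧ r (f i) (f j)

/-- Upward compatibility of an ordering with a transition relation. -/
def UpwardCompatible {α : Type*} (step le : α → α → Prop) : Prop :=
  ∀ c₁ c₁' c₂, le c₁ c₁' → step c₁ c₂ →
    ∃ c₂', Relation.ReflTransGen step c₁' c₂' ∧ le c₂ c₂'

/-- Well-structured transition system. -/
def IsWSTS {α : Type*} (step le : α → α → Prop) : Prop :=
  Reflexive le ∧ Transitive le ∧ IsWQO le ∧ UpwardCompatible step le

/-- `↑𝒟` within the configurations of `C`. -/
def upSet (C : Contract) (D : Set Config) : Set Config :=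
  {c' | ConfigOf C c' ∧ ∃ c ∈ D, ConfigLe c c'}

/-- `Pred(𝒟)` w.r.t. `→_tp`, within the configurations of `C`. -/
def predTP (C : Contract) (D : Set Config) : Set Config :=
  {c | ConfigOf C c ∧ ∃ c' ∈ D, StepTP C c c'}

/-! ### Encodings -/

def Ev.equivProd : Ev ≃ ℕ × ℕ × ℕ × ℕ :=
  ⟨fun e => (e.time, e.line, e.src, e.tgt), fun p => ⟨p.1, p.2.1, p.2.2.1, p.2.2.2⟩,
   fun _ => rfl, fun _ => rfl⟩

instance : Encodable Ev := Encodable.ofEquiv _ Ev.equivProd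

def FunDecl.equivProd : FunDecl ≃ ℕ × ℕ × List Ev × ℕ :=
  ⟨fun f => (f.src, f.name, f.body, f.tgt), fun p => ⟨p.1, p.2.1, p.2.2.1, p.2.2.2⟩,
   fun _ => rfl, fun _ => rfl⟩

instance : Encodable FunDecl := Encodable.ofEquiv _ FunDecl.equivProd

def Contract.equivProd : Contract ≃ List ℕ × ℕ × List FunDecl :=
  ⟨fun C => (C.states, C.init, C.funs), fun p => ⟨p.1, p.2.1, p.2.2⟩,
   fun _ => rfl, fun _ => rfl⟩

instance : Encodable Contract := Encodable.ofEquiv _ Contract.equivProd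

def Sig.equivOption : Sig ≃ Option (Multiset Ev × ℕ) where
  toFun s := match s with | Sig.none => Option.none | Sig.cont m q => some (m, q)
  invFun o := match o with | Option.none => Sig.none | some (m, q) => Sig.cont m q
  left_inv s := by cases s <;> rfl
  right_inv o := by rcases o with _ | ⟨m, q⟩ <;> rfl

instance : Encodable Sig := Encodable.ofEquiv _ Sig.equivOption

def Config.equivProd : Config ≃ ℕ × Sig × Multiset Ev × ℕ :=
  ⟨fun c => (c.state, c.sig, c.pending, c.time), fun p => ⟨p.1, p.2.1, p.2.2.1, p.2.2.2⟩,
   fun _ => rfl, fun _ => rfl⟩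

instance : Encodable Config := Encodable.ofEquiv _ Config.equivProd

/-! ### Minsky machines -/

/-- A Minsky machine instruction (the register is `false` for `R₁`, `true` for `R₂`):
`inc r next` and `decjump r ifZero ifPos`. -/
inductive MInstr where
  | inc : Bool → ℕ → MInstr
  | decjump : Bool → ℕ → ℕ → MInstr
  deriving DecidableEq

/-- A Minsky machine. -/
structure Minsky where
  states : List ℕ
  init   : ℕ
  final  : ℕ
  prog   : List (ℕ × MInstr)
  deriving DecidableEq

/-- Well-formed Minsky machine: the final state has no instruction. -/
def Minsky.WF (M : Minsky) : Prop :=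
  M.init ∈ M.states ∧ M.final ∈ M.states ∧ (∀ i, (M.final, i) ∉ M.prog) ∧
  ∀ p ∈ M.prog, p.1 ∈ M.states ∧
    (match p.2 with
     | MInstr.inc _ q => q ∈ M.states
     | MInstr.decjump _ q q' => q ∈ M.states ∧ q' ∈ M.states)

/-- The transition relation of a Minsky machine on configurations `(Q, v₁, v₂)`. -/
inductive MStep (M : Minsky) : ℕ × ℕ × ℕ → ℕ × ℕ × ℕ → Prop
  | inc₁ {Q Q' v₁ v₂} : (Q, MInstr.inc false Q') ∈ M.prog →
      MStep M (Q, v₁, v₂) (Q', v₁ + 1, v₂)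
  | inc₂ {Q Q' v₁ v₂} : (Q, MInstr.inc true Q') ∈ M.prog →
      MStep M (Q, v₁, v₂) (Q', v₁, v₂ + 1)
  | jz₁ {Q Q' Q'' v₂} : (Q, MInstr.decjump false Q' Q'') ∈ M.prog →
      MStep M (Q, 0, v₂) (Q', 0, v₂)
  | dec₁ {Q Q' Q'' v₁ v₂} : (Q, MInstr.decjump false Q' Q'') ∈ M.prog →
      MStep M (Q, v₁ + 1, v₂) (Q'', v₁, v₂)
  | jz₂ {Q Q' Q'' v₁} : (Q, MInstr.decjump true Q' Q'') ∈ M.prog →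
      MStep M (Q, v₁, 0) (Q', v₁, 0)
  | dec₂ {Q Q' Q'' v₁ v₂} : (Q, MInstr.decjump true Q' Q'') ∈ M.prog →
      MStep M (Q, v₁, v₂ + 1) (Q'', v₁, v₂)

/-- The halting problem: the final state is reachable from `(Q₀, 0, 0)`. -/
def Minsky.Halts (M : Minsky) : Prop :=
  ∃ v₁ v₂, Relation.ReflTransGen (MStep M) (M.init, 0, 0) (M.final, v₁, v₂)

def MInstr.equivSum : MInstr ≃ (Bool × ℕ) ⊕ (Bool × ℕ × ℕ) where
  toFun i := match i with
    | MInstr.inc r q => Sum.inl (r, q)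
    | MInstr.decjump r q q' => Sum.inr (r, q, q')
  invFun s := match s with
    | Sum.inl (r, q) => MInstr.inc r q
    | Sum.inr (r, q, q') => MInstr.decjump r q q'
  left_inv i := by cases i <;> rfl
  right_inv s := by rcases s with ⟨r, q⟩ | ⟨r, q, q'⟩ <;> rfl

instance : Encodable MInstr := Encodable.ofEquiv _ MInstr.equivSum

def Minsky.equivProd : Minsky ≃ List ℕ × ℕ × ℕ × List (ℕ × MInstr) :=
  ⟨fun M => (M.states, M.init, M.final, M.prog), fun p => ⟨p.1, p.2.1, p.2.2.1, p.2.2.2⟩,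
   fun _ => rfl, fun _ => rfl⟩

instance : Encodable Minsky := Encodable.ofEquiv _ Minsky.equivProd

/-! ### Clauses -/

/-- A clause of a contract: either a function `⟨Q, f, Q'⟩` or an event `⟨Q, ev_n, Q'⟩`. -/
inductive Clause where
  | fn : ℕ → ℕ → ℕ → Clause
  | ev : ℕ → ℕ → ℕ → Clause
  deriving DecidableEq

/-- The clause belongs to the contract. -/
def ClauseOf (C : Contract) : Clause → Prop
  | Clause.fn Q g Q' => ∃ f ∈ C.funs, f.src = Q ∧ f.name = g ∧ f.tgt = Q'
  | Clause.ev Q n Q' => ∃ f ∈ C.funs, ∃ e ∈ f.body, e.line = n ∧ e.src = Q ∧ e.tgt = Q'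

/-- Some computation starting from the initial configuration of `C` contains a transition
executing the given clause: an instance of rule (Function) invoking the function, resp.
an instance of rule (Event-Match) firing the event. -/
def Executes (C : Contract) : Clause → Prop
  | Clause.fn Q g Q' => ∃ t t' Ψ, ∃ f ∈ C.funs,
      f.src = Q ∧ f.name = g ∧ f.tgt = Q' ∧ nored Ψ Q ∧
      Relation.ReflTransGen (Step C) ⟨C.init, Sig.none, 0, t⟩ ⟨Q, Sig.none, Ψ, t'⟩
  | Clause.ev Q n Q' => ∃ t t' Ψ, ∃ e ∈ Ψ,
      e.time = 0 ∧ Ev.line e = n ∧ e.src = Q ∧ e.tgt = Q' ∧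
      Relation.ReflTransGen (Step C) ⟨C.init, Sig.none, 0, t⟩ ⟨Q, Sig.none, Ψ, t'⟩

def Clause.equivSum : Clause ≃ (ℕ × ℕ × ℕ) ⊕ (ℕ × ℕ × ℕ) where
  toFun c := match c with
    | Clause.fn a b d => Sum.inl (a, b, d)
    | Clause.ev a b d => Sum.inr (a, b, d)
  invFun s := match s with
    | Sum.inl (a, b, d) => Clause.fn a b d
    | Sum.inr (a, b, d) => Clause.ev a b d
  left_inv c := by cases c <;> rfl
  right_inv s := by rcases s with ⟨a, b, d⟩ | ⟨a, b, d⟩ <;> rfl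

instance : Encodable Clause := Encodable.ofEquiv _ Clause.equivSum

/-- `⟦v₁, v₂⟧_Q`: the multiset made of `v₁` copies of a first event, `v₂` copies of a
second event, and one event depending on the machine state `Q`. -/
def msem (e₁ e₂ : Minsky → Ev) (e₃ : Minsky → ℕ → Ev) (M : Minsky)
    (Q v₁ v₂ : ℕ) : Multiset Ev :=
  Multiset.replicate v₁ (e₁ M) + Multiset.replicate v₂ (e₂ M) + {e₃ M Q}

/-! In a μStipula^DI contract every pending event has time value `0` and starts in a state
of `InitEv C`. So (Tick-Plus), which only fires outside `InitEv C`, is an instance of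
(Tick). Conversely, a (Tick) step discards all pending events; a `→_tp` computation that
skips it keeps a larger multiset of pending events, which by determinacy never disables a
function and still contains every event that (Event-Match) needs. Hence `→` computations
are simulated by `→_tp` computations up to `ConfigLe`. -/

def InstantEv (C : Contract) (e : Ev) : Prop := e.time = 0 ∧ e.src ∈ InitEv C

def InstantConfig (C : Contract) (c : Config) : Prop :=
  (∀ e ∈ c.pending, InstantEv C e) ∧ ∀ m q, c.sig = Sig.cont m q → ∀ e ∈ m, InstantEv C e

section

variable {C : Contract} {c d : Config}

lemma instantConfig_initial (t : ℕ) : InstantConfig C ⟨C.init, Sig.none, 0, t⟩ :=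
  ⟨by simp, by rintro m q ⟨⟩⟩

lemma instantEv_of_mem_bodyEvents (hI : Instantaneous C) {f : FunDecl} (hf : f ∈ C.funs)
    {e : Ev} (he : e ∈ bodyEvents f.body) : InstantEv C e :=
  ⟨hI f hf e he, f, hf, e, he, rfl⟩

lemma nored_of_forall_instantEv {Ψ : Multiset Ev} {Q : ℕ} (h : ∀ e ∈ Ψ, InstantEv C e)
    (hQ : Q ∉ InitEv C) : nored Ψ Q :=
  fun e he _ hsrc => hQ (hsrc ▸ (h e he).2)

lemma tickDown_eq_zero {Ψ : Multiset Ev} (h : ∀ e ∈ Ψ, e.time = 0) : tickDown Ψ = 0 := by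
  rw [tickDown, Multiset.filter_eq_nil.2 fun e he hne => hne (h e he), Multiset.map_zero]

lemma InstantConfig.step (hI : Instantaneous C) (hc : InstantConfig C c) (h : Step C c d) :
    InstantConfig C d := by
  obtain ⟨hpending, hsig⟩ := hc
  cases h with
  | func f hf _ =>
    refine ⟨hpending, ?_⟩
    rintro m q ⟨⟩ e he
    exact instantEv_of_mem_bodyEvents hI hf he
  | @stateChange _ Q' Ψ' _ _ =>
    refine ⟨fun e he => ?_, by rintro m q ⟨⟩⟩
    rcases Multiset.mem_add.1 he with he | he
    exacts [hsig Ψ' Q' rfl e he, hpending e he]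
  | eventMatch e _ _ _ =>
    refine ⟨fun a ha => hpending a (Multiset.mem_of_mem_erase ha), ?_⟩
    rintro m q ⟨⟩ a ha
    simp at ha
  | tick _ =>
    refine ⟨?_, by rintro m q ⟨⟩⟩
    simp [tickDown_eq_zero fun e he => (hpending e he).1]

lemma Step.of_stepTP (hc : InstantConfig C c) (h : StepTP C c d) : Step C c d := by
  cases h with
  | func f hf hn => exact Step.func f hf hn
  | stateChange => exact Step.stateChange
  | eventMatch e he h0 hs => exact Step.eventMatch e he h0 hs
  | tickPlus hQ => exact Step.tick (nored_of_forall_instantEv hc.1 hQ)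

lemma InstantConfig.reflTransGen_stepTP (hI : Instantaneous C) (hc : InstantConfig C c)
    (h : Relation.ReflTransGen (StepTP C) c d) : InstantConfig C d := by
  induction h with
  | refl => exact hc
  | tail _ hstep ih => exact ih.step hI (Step.of_stepTP ih hstep)

lemma reflTransGen_step_of_stepTP (hI : Instantaneous C) (hc : InstantConfig C c)
    (h : Relation.ReflTransGen (StepTP C) c d) : Relation.ReflTransGen (Step C) c d := by
  induction h with
  | refl => exact .refl
  | tail hrun hstep ih => exact ih.tail (Step.of_stepTP (hc.reflTransGen_stepTP hI hrun) hstep)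

lemma exists_stepTP_of_step (hD : Determinate C) (hc : InstantConfig C c)
    {c' : Config} (hc' : InstantConfig C c') (hle : ConfigLe c c') (h : Step C c d) :
    ∃ d', Relation.ReflTransGen (StepTP C) c' d' ∧ ConfigLe d d' := by
  obtain ⟨Q, S, Ψ, t⟩ := c'
  obtain ⟨hstate, hsig, hpending⟩ := hle
  cases h with
  | func f hf _ =>
    subst hstate hsig
    exact ⟨_, .single (StepTP.func f hf (nored_of_forall_instantEv hc'.1 (hD f hf))),
      rfl, rfl, hpending⟩
  | stateChange =>
    subst hstate hsig
    exact ⟨_, .single StepTP.stateChange, rfl, rfl, add_le_add_right hpending _⟩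
  | eventMatch e he h0 hs =>
    subst hstate hsig
    exact ⟨_, .single (StepTP.eventMatch e (Multiset.mem_of_le hpending he) h0 hs),
      rfl, rfl, Multiset.erase_le_erase e hpending⟩
  | tick _ =>
    subst hstate hsig
    refine ⟨_, .refl, rfl, rfl, ?_⟩
    rw [tickDown_eq_zero fun e he => (hc.1 e he).1]
    exact Multiset.zero_le _

lemma exists_stepTP_of_reflTransGen_step (hDI : DetInst C) (hc : InstantConfig C c)
    {c' : Config} (hc' : InstantConfig C c') (hle : ConfigLe c c')
    (h : Relation.ReflTransGen (Step C) c d) :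
    ∃ d', Relation.ReflTransGen (StepTP C) c' d' ∧ ConfigLe d d' := by
  induction h using Relation.ReflTransGen.head_induction_on generalizing c' with
  | refl => exact ⟨c', .refl, hle⟩
  | head hstep _ ih =>
    obtain ⟨b', hrun, hle'⟩ := exists_stepTP_of_step hDI.1 hc hc' hle hstep
    obtain ⟨d', hrun', hle''⟩ :=
      ih (hc.step hDI.2 hstep) (hc'.reflTransGen_stepTP hDI.2 hrun) hle'
    exact ⟨d', hrun.trans hrun', hle''⟩

end

theorem reachable_iff_reachableTP_general (C : Contract) (hDI : DetInst C) (Q : ℕ) :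
    Reachable C Q ↔ ReachableTP C Q := by
  constructor
  · rintro ⟨t, t', Ψ, hrun⟩
    obtain ⟨⟨_, _, Ψ', t''⟩, hrun', rfl, rfl, -⟩ :=
      exists_stepTP_of_reflTransGen_step hDI (instantConfig_initial t)
        (instantConfig_initial t) ⟨rfl, rfl, le_rfl⟩ hrun
    exact ⟨t, t'', Ψ', hrun'⟩
  · rintro ⟨t, t', Ψ, hrun⟩
    exact ⟨t, t', Ψ, reflTransGen_step_of_stepTP hDI.2 (instantConfig_initial t) hrun⟩

/-- For every μStipula^DI contract `C` and every state `Q` of `C`,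
`Q` is reachable in `C` w.r.t. `→` iff `Q` is reachable in `C` w.r.t. `→_tp`. -/
theorem reachable_iff_reachableTP (C : Contract) (hwf : C.WF) (hDI : DetInst C)
    (Q : ℕ) (hQ : Q ∈ C.states) :
    Reachable C Q ↔ ReachableTP C Q :=
  reachable_iff_reachableTP_general C hDI Q

end MicroStipula
end

section
/- For every μStipula^DI+ contract C, the triple (𝒞_C, →_tp, ⪯) — where 𝒞_C is the set of configurations of C — is a well-structured transition system. -/
namespace MicroStipula

/-! Configurations are compared through their control part `(Q, Σ)`, which ranges over a finite
set, and the multiset of their pending events, which range over the finitely many time-decreased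
copies of the event declarations of `C`; by Dickson's lemma `⪯` is a well-quasi-ordering.
Upward compatibility already holds step by step: extra pending events never disable
(State-Change), (Event-Match) or (Tick-Plus), and they cannot make (Function) fail its `nored`
check, because determinacy keeps events away from the states where functions are invoked. -/

theorem _root_.WellQuasiOrdered.of_map {α β : Type*} {r : α → α → Prop} {s : β → β → Prop}
    (hs : WellQuasiOrdered s) (g : α → β) (hg : ∀ a b, s (g a) (g b) → r a b) :
    WellQuasiOrdered r := fun f =>
  let ⟨m, n, hmn, h⟩ := hs (g ∘ f)
  ⟨m, n, hmn, hg _ _ h⟩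

instance _root_.Multiset.wellQuasiOrderedLE {α : Type*} [Finite α] :
    WellQuasiOrderedLE (Multiset α) := by
  classical exact Finsupp.orderIsoMultiset.wellQuasiOrderedLE_iff.1 inferInstance

lemma EvOf.src_mem_initEv {C : Contract} {e : Ev} (h : EvOf C e) : e.src ∈ InitEv C := by
  obtain ⟨f, hf, d, hd, -, hsrc, -⟩ := h
  exact ⟨f, hf, d, hd, hsrc.symm⟩

lemma nored_of_notMem_initEv {C : Contract} {Ψ : Multiset Ev} {Q : ℕ}
    (hΨ : ∀ e ∈ Ψ, EvOf C e) (hQ : Q ∉ InitEv C) : nored Ψ Q :=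
  fun e he _ hsrc => hQ (hsrc ▸ (hΨ e he).src_mem_initEv)

lemma finite_setOf_evOf (C : Contract) : {e | EvOf C e}.Finite := by
  refine (C.funs.finite_toSet.biUnion fun f _ => f.body.finite_toSet.biUnion fun d _ =>
    (Set.finite_Iic d.time).image fun t => (⟨t, d.line, d.src, d.tgt⟩ : Ev)).subset ?_
  rintro ⟨t, n, q, q'⟩ ⟨f, hf, d, hd, rfl, rfl, rfl, ht⟩
  simp only [Set.mem_iUnion, Set.mem_image]
  exact ⟨f, hf, d, hd, t, ht, rfl⟩

lemma finite_setOf_sigOf (C : Contract) : {σ | SigOf C σ}.Finite := by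
  refine (((C.funs.finite_toSet.image fun f => Sig.cont (bodyEvents f.body) f.tgt).union
    (C.states.finite_toSet.image fun Q => Sig.cont 0 Q)).insert Sig.none).subset ?_
  rintro σ (_ | ⟨f, hf⟩ | ⟨Q, hQ⟩)
  · exact Or.inl rfl
  · exact Or.inr (Or.inl ⟨f, hf, rfl⟩)
  · exact Or.inr (Or.inr ⟨Q, hQ, rfl⟩)

lemma ConfigLe.refl (c : Config) : ConfigLe c c := ⟨rfl, rfl, le_rfl⟩

lemma ConfigLe.trans {c₁ c₂ c₃ : Config} (h₁₂ : ConfigLe c₁ c₂) (h₂₃ : ConfigLe c₂ c₃) :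
    ConfigLe c₁ c₃ :=
  ⟨h₁₂.1.trans h₂₃.1, h₁₂.2.1.trans h₂₃.2.1, h₁₂.2.2.trans h₂₃.2.2⟩

theorem wellQuasiOrdered_configLe (C : Contract) :
    WellQuasiOrdered fun c c' : {c : Config // ConfigOf C c} => ConfigLe c.1 c'.1 := by
  have : Finite {p : ℕ × Sig // p.1 ∈ C.states ∧ SigOf C p.2} :=
    ((C.states.finite_toSet.prod (finite_setOf_sigOf C)).subset fun _ h => h).to_subtype
  have : Finite {e // EvOf C e} := (finite_setOf_evOf C).to_subtype
  refine WellQuasiOrdered.of_map ((Finite.wellQuasiOrdered (· = ·)).prod wellQuasiOrdered_le)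
    (fun c => ((⟨(c.1.state, c.1.sig), c.2.1, c.2.2.1⟩ :
        {p : ℕ × Sig // p.1 ∈ C.states ∧ SigOf C p.2}),
      c.1.pending.pmap (Subtype.mk (p := fun e => EvOf C e)) c.2.2.2)) ?_
  rintro c c' ⟨hkey, hpending⟩
  simp only [Subtype.mk.injEq, Prod.mk.injEq] at hkey
  refine ⟨hkey.1, hkey.2, ?_⟩
  simpa only [Multiset.map_pmap, Multiset.pmap_eq_map, Multiset.map_id'] using
    Multiset.map_le_map (f := Subtype.val) hpending

lemma evOf_of_mem_tickDown {C : Contract} {Ψ : Multiset Ev} (hΨ : ∀ e ∈ Ψ, EvOf C e)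
    {e' : Ev} (he' : e' ∈ tickDown Ψ) : EvOf C e' := by
  simp only [tickDown, Multiset.mem_map, Multiset.mem_filter] at he'
  obtain ⟨e, ⟨he, -⟩, rfl⟩ := he'
  obtain ⟨f, hf, d, hd, hline, hsrc, htgt, htime⟩ := hΨ e he
  exact ⟨f, hf, d, hd, hline, hsrc, htgt, htime.trans' (Nat.sub_le _ _)⟩

lemma evOf_of_mem_bodyEvents {C : Contract} {f : FunDecl} (hf : f ∈ C.funs) {e : Ev}
    (he : e ∈ bodyEvents f.body) : EvOf C e :=
  ⟨f, hf, e, he, rfl, rfl, rfl, le_rfl⟩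

lemma StepTP.configOf {C : Contract} (hwf : C.WF) {c c' : Config} (hstep : StepTP C c c')
    (hc : ConfigOf C c) : ConfigOf C c' := by
  obtain ⟨hstate, hsig, hpending⟩ := hc
  cases hstep with
  | func f hf _ => exact ⟨hstate, .func f hf, hpending⟩
  | stateChange =>
    cases hsig with
    | func f hf =>
      exact ⟨(hwf.2 f hf).2.1, .none, fun e he =>
        (Multiset.mem_add.1 he).elim (evOf_of_mem_bodyEvents hf) (hpending e)⟩
    | event Q hQ => exact ⟨hQ, .none, by simpa using hpending⟩
  | eventMatch e he _ _ =>
    obtain ⟨f, hf, d, hd, -, -, htgt, -⟩ := hpending e he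
    exact ⟨hstate, .event _ (htgt ▸ ((hwf.2 f hf).2.2 d hd).2),
      fun a ha => hpending a (Multiset.mem_of_mem_erase ha)⟩
  | tickPlus _ => exact ⟨hstate, .none, fun _ => evOf_of_mem_tickDown hpending⟩

theorem StepTP.exists_of_configLe {C : Contract} (hD : Determinate C) {c₁ c₁' c₂ : Config}
    (hstep : StepTP C c₁ c₂) (hle : ConfigLe c₁ c₁') (hc₁' : ∀ e ∈ c₁'.pending, EvOf C e) :
    ∃ c₂', StepTP C c₁' c₂' ∧ ConfigLe c₂ c₂' := by
  obtain ⟨Q, σ, Ψ, t⟩ := c₁'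
  obtain ⟨rfl, rfl, hΨ⟩ := hle
  cases hstep with
  | func f hf _ =>
    exact ⟨_, .func f hf (nored_of_notMem_initEv hc₁' (hD f hf)), rfl, rfl, hΨ⟩
  | stateChange => exact ⟨_, .stateChange, rfl, rfl, add_le_add_right hΨ _⟩
  | eventMatch e he h0 hsrc =>
    exact ⟨_, .eventMatch e (Multiset.mem_of_le hΨ he) h0 hsrc, rfl, rfl,
      Multiset.erase_le_erase e hΨ⟩
  | tickPlus hQ =>
    exact ⟨_, .tickPlus hQ, rfl, rfl, Multiset.map_le_map (Multiset.filter_le_filter _ hΨ)⟩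

/-- (Lemma 1) For every μStipula^DI+ contract `C`, the triple
`(𝒞_C, →_tp, ⪯)` is a well-structured transition system, where `𝒞_C` is the set of
configurations of `C`. -/
theorem isWSTS_DIplus (C : Contract) (hwf : C.WF) (hDI : DetInst C) :
    IsWSTS (fun c c' : {c : Config // ConfigOf C c} => StepTP C c.1 c'.1)
           (fun c c' : {c : Config // ConfigOf C c} => ConfigLe c.1 c'.1) := by
  refine ⟨fun c => ConfigLe.refl c.1, fun _ _ _ h₁₂ h₂₃ => h₁₂.trans h₂₃,
    wellQuasiOrdered_configLe C, ?_⟩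
  rintro ⟨c₁, _⟩ ⟨c₁', hc₁'⟩ ⟨c₂, _⟩ hle hstep
  obtain ⟨c₂', hstep', hle'⟩ := StepTP.exists_of_configLe hDI.1 hstep hle hc₁'.2.2
  exact ⟨⟨c₂', hstep'.configOf hwf hc₁'⟩, .single hstep', hle'⟩

end MicroStipula
end
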